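/- arXiv:math/0209116 — 3 statements merged into one kernel-verified Lean document; each statement's English description precedes it below -/
import Mathlib

section
/- For every non-archimedean seminorm γ on a finite-dimensional vector space V over a non-archimedean local field K, there exists a basis v₁,…,vₙ of V with respect to which γ is canonical, i.e. γ(λ₁v₁ + ⋯ + λₙvₙ) = max{|λ₁|γ(v₁), …, |λₙ|γ(vₙ)} for all λᵢ ∈ K. -/
/-!
Orthogonalize a basis one vector at a time. Given a `γ`-orthogonal family `v`, replace the next
basis vector `u` by `u + w₀`, where `w₀ ∈ span v` minimizes `γ (u + w)`; by the ultrametric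
inequality such a best approximation is orthogonal to `span v`, so the enlarged family stays
orthogonal. A minimizer exists: if the infimum `d` of `γ (u + w)` is not attained, every value
`γ (u + w)` equals some `‖a‖ * γ (vᵢ)`, and discreteness of `‖K‖` leaves only finitely many such
values in `[d, q d)`, the least of which would be a minimum; if `d = 0` the coordinates of a
minimizing sequence are Cauchy and completeness of `K` provides a zero of `γ (u + ·)`.
-/

/-- A (non-archimedean) seminorm on a `K`-vector space `V`: a nonnegative real-valued
map, not identically zero, homogeneous with respect to the norm on `K`, and
satisfying the ultrametric inequality. -/
structure IsSeminorm (K : Type*) {V : Type*} [NormedField K] [AddCommGroup V] [Module K V]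
    (γ : V → ℝ) : Prop where
  nonneg : ∀ v, 0 ≤ γ v
  exists_ne_zero : ∃ v, γ v ≠ 0
  smul : ∀ (a : K) (v : V), γ (a • v) = ‖a‖ * γ v
  add_le : ∀ v w : V, γ (v + w) ≤ max (γ v) (γ w)

/-- `γ` is canonical with respect to the basis `b`:
`γ (∑ λᵢ • bᵢ) = maxᵢ ‖λᵢ‖ * γ(bᵢ)`. -/
def IsCanonical {K V : Type*} [NormedField K] [AddCommGroup V] [Module K V] {n : ℕ}
    (γ : V → ℝ) (b : Module.Basis (Fin n) K V) : Prop :=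
  ∀ lam : Fin n → K, γ (∑ i, lam i • b i) = ⨆ i, ‖lam i‖ * γ (b i)

open Set Submodule

theorem mul_norm_le_norm_of_norm_lt {K : Type*} [NormedField K] {q : ℝ} (hq : 1 < q)
    (hdisc : ∀ a : K, a ≠ 0 → ∃ m : ℤ, ‖a‖ = q ^ m) {a b : K} (hab : ‖a‖ < ‖b‖) :
    q * ‖a‖ ≤ ‖b‖ := by
  rcases eq_or_ne a 0 with rfl | ha
  · simp
  have hb : b ≠ 0 := norm_pos_iff.1 ((norm_nonneg a).trans_lt hab)
  have ha' : 0 < ‖a‖ := norm_pos_iff.2 ha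
  obtain ⟨m, hm⟩ := hdisc (b / a) (div_ne_zero hb ha)
  have hm_pos : 0 < m := by
    rw [← one_lt_zpow_iff_right₀ hq, ← hm, norm_div, one_lt_div ha']
    exact hab
  calc q * ‖a‖ = q ^ (1 : ℤ) * ‖a‖ := by rw [zpow_one]
    _ ≤ q ^ m * ‖a‖ := by gcongr; exacts [hq.le, hm_pos]
    _ = ‖b‖ := by rw [← hm, norm_div, div_mul_cancel₀ _ ha'.ne']

theorem subsingleton_range_norm_mul_inter_Ico {K : Type*} [NormedField K] {q : ℝ} (hq : 1 < q)
    (hdisc : ∀ a : K, a ≠ 0 → ∃ m : ℤ, ‖a‖ = q ^ m) {r : ℝ} (hr : 0 ≤ r) (d : ℝ) :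
    (range (fun a : K => ‖a‖ * r) ∩ Ico d (q * d)).Subsingleton := by
  rintro _ ⟨⟨a, rfl⟩, ha⟩ _ ⟨⟨b, rfl⟩, hb⟩
  wlog hab : ‖a‖ ≤ ‖b‖ generalizing a b
  · exact (this b hb a ha (le_of_not_ge hab)).symm
  rcases hab.lt_or_eq with hab | hab
  · refine absurd hb.2 (not_lt.2 ?_)
    calc q * d ≤ q * (‖a‖ * r) := by gcongr; exact ha.1
      _ ≤ ‖b‖ * r := by
        rw [← mul_assoc]
        exact mul_le_mul_of_nonneg_right (mul_norm_le_norm_of_norm_lt hq hdisc hab) hr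
  · simp only [hab]

theorem exists_forall_norm_sub_mul_le_of_geometric {E : Type*} [SeminormedAddCommGroup E]
    [CompleteSpace E] {x : ℕ → E} {s r : ℝ} (hs : 0 ≤ s) (hr₀ : 0 ≤ r) (hr : r < 1)
    (h : ∀ k, ‖x k - x (k + 1)‖ * s ≤ r ^ k) :
    ∃ L, ∀ k, ‖x k - L‖ * s ≤ r ^ k / (1 - r) := by
  rcases hs.eq_or_lt with rfl | hs
  · exact ⟨0, fun k => by rw [mul_zero]; exact div_nonneg (pow_nonneg hr₀ k) (by linarith)⟩
  have hdist : ∀ k, dist (x k) (x (k + 1)) ≤ s⁻¹ * r ^ k := fun k => by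
    rw [dist_eq_norm, ← div_eq_inv_mul, le_div_iff₀ hs]
    exact h k
  obtain ⟨L, hL⟩ := cauchySeq_tendsto_of_complete (cauchySeq_of_le_geometric r s⁻¹ hr hdist)
  refine ⟨L, fun k => ?_⟩
  have hk := dist_le_of_le_geometric_of_tendsto r s⁻¹ hr hdist hL k
  rw [dist_eq_norm] at hk
  calc ‖x k - L‖ * s ≤ s⁻¹ * r ^ k / (1 - r) * s := by gcongr
    _ = r ^ k / (1 - r) := by field_simp

theorem add_sum_smul_sub_add_sum_smul {K V ι : Type*} [Ring K] [AddCommGroup V] [Module K V]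
    [Fintype ι] (u : V) (v : ι → V) (c c' : ι → K) :
    (u + ∑ i, c i • v i) - (u + ∑ i, c' i • v i) = ∑ i, (c i - c' i) • v i := by
  simp only [sub_smul, Finset.sum_sub_distrib, add_sub_add_left_eq_sub]

def IsOrthogonal (K : Type*) {V ι : Type*} [NormedField K] [AddCommGroup V] [Module K V]
    [Fintype ι] (γ : V → ℝ) (v : ι → V) : Prop :=
  ∀ c : ι → K, γ (∑ i, c i • v i) = ⨆ i, ‖c i‖ * γ (v i)

theorem IsOrthogonal.exists_eq_norm_mul {K V ι : Type*} [NormedField K] [AddCommGroup V]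
    [Module K V] [Fintype ι] [Nonempty ι] {γ : V → ℝ} {v : ι → V} (hv : IsOrthogonal K γ v)
    (c : ι → K) : ∃ i, γ (∑ j, c j • v j) = ‖c i‖ * γ (v i) := by
  obtain ⟨i, hi⟩ := exists_eq_ciSup_of_finite (f := fun i => ‖c i‖ * γ (v i))
  exact ⟨i, (hv c).trans hi.symm⟩

section Ultrametric

variable {K V : Type*} [NormedField K] [AddCommGroup V] [Module K V] {γ : V → ℝ}
  (hsmul : ∀ (a : K) (v : V), γ (a • v) = ‖a‖ * γ v)
include hsmul

theorem apply_zero_of_map_smul : γ 0 = 0 := by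
  simpa using hsmul 0 0

theorem apply_neg_of_map_smul (v : V) : γ (-v) = γ v := by
  simpa using hsmul (-1) v

variable (hna : IsNonarchimedean γ)
include hna

theorem apply_nonneg_of_map_smul (v : V) : 0 ≤ γ v := by
  simpa [apply_zero_of_map_smul hsmul, apply_neg_of_map_smul hsmul] using hna v (-v)

theorem apply_sub_le_max (v w : V) : γ (v - w) ≤ max (γ v) (γ w) := by
  simpa [sub_eq_add_neg, apply_neg_of_map_smul hsmul] using hna v (-w)

theorem apply_sub_eq_left_of_lt {v w : V} (h : γ w < γ v) : γ (v - w) = γ v := by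
  have hneg (x : V) := (apply_neg_of_map_smul hsmul x).symm
  rw [sub_eq_add_neg, hna.add_eq_max_of_ne' γ hneg (by rw [← hneg]; exact h.ne'), ← hneg,
    max_eq_left h.le]

theorem apply_sum_le_of_forall_le {ι : Type*} {s : Finset ι} {x : ι → V} {r : ℝ} (hr : 0 ≤ r)
    (h : ∀ i ∈ s, γ (x i) ≤ r) : γ (∑ i ∈ s, x i) ≤ r :=
  Finset.sum_induction x (γ · ≤ r) (fun a b ha hb => (hna a b).trans (max_le ha hb))
    ((apply_zero_of_map_smul hsmul).trans_le hr) h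

theorem apply_smul_add_eq_max_of_forall_le {W : Submodule K V} {u : V}
    (hu : ∀ w ∈ W, γ u ≤ γ (u + w)) (a : K) {w : V} (hw : w ∈ W) :
    γ (a • u + w) = max (‖a‖ * γ u) (γ w) := by
  have hle : ‖a‖ * γ u ≤ γ (a • u + w) := by
    rcases eq_or_ne a 0 with rfl | ha
    · simpa using apply_nonneg_of_map_smul hsmul hna w
    calc ‖a‖ * γ u ≤ ‖a‖ * γ (u + a⁻¹ • w) := by gcongr; exact hu _ (W.smul_mem _ hw)
      _ = γ (a • u + w) := by rw [← hsmul, smul_add, smul_inv_smul₀ ha]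
  refine le_antisymm ((hna _ _).trans_eq (by rw [hsmul])) (max_le hle ?_)
  calc γ w = γ ((a • u + w) - a • u) := by rw [add_sub_cancel_left]
    _ ≤ max (γ (a • u + w)) (γ (a • u)) := apply_sub_le_max hsmul hna _ _
    _ ≤ γ (a • u + w) := max_le le_rfl (by rw [hsmul]; exact hle)

variable {ι : Type*} [Fintype ι]

theorem isOrthogonal_iff_forall_norm_mul_le {v : ι → V} :
    IsOrthogonal K γ v ↔ ∀ (c : ι → K) (i : ι), ‖c i‖ * γ (v i) ≤ γ (∑ j, c j • v j) := by
  have hbdd (c : ι → K) := (finite_range fun i => ‖c i‖ * γ (v i)).bddAbove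
  refine ⟨fun hv c i => (hv c).symm ▸ le_ciSup (hbdd c) i, fun h c => le_antisymm ?_ ?_⟩
  · refine apply_sum_le_of_forall_le hsmul hna (Real.iSup_nonneg fun i =>
      mul_nonneg (norm_nonneg _) (apply_nonneg_of_map_smul hsmul hna _)) fun i _ => ?_
    rw [hsmul]
    exact le_ciSup (hbdd c) i
  · exact Real.iSup_le (h c) (apply_nonneg_of_map_smul hsmul hna _)

theorem IsOrthogonal.cons {n : ℕ} {v : Fin n → V} (hv : IsOrthogonal K γ v) {u : V}
    (hu : ∀ w ∈ span K (range v), γ u ≤ γ (u + w)) :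
    IsOrthogonal K γ (Fin.cons u v : Fin (n + 1) → V) := by
  rw [isOrthogonal_iff_forall_norm_mul_le hsmul hna] at hv ⊢
  intro c i
  have hw : ∑ j, c j.succ • v j ∈ span K (range v) :=
    sum_mem fun j _ => smul_mem _ _ (subset_span (mem_range_self j))
  rw [Fin.sum_univ_succ]
  simp only [Fin.cons_zero, Fin.cons_succ]
  rw [apply_smul_add_eq_max_of_forall_le hsmul hna hu _ hw]
  cases i using Fin.cases with
  | zero => exact le_max_left _ _
  | succ j =>
    rw [Fin.cons_succ]
    exact (hv (fun j => c j.succ) j).trans (le_max_right _ _)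

theorem IsOrthogonal.exists_apply_add_sum_eq_zero [CompleteSpace K] {v : ι → V}
    (hv : IsOrthogonal K γ v) (u : V) (h : ∀ ε > 0, ∃ c : ι → K, γ (u + ∑ i, c i • v i) < ε) :
    ∃ c : ι → K, γ (u + ∑ i, c i • v i) = 0 := by
  choose c hc using fun k : ℕ => h ((2⁻¹ : ℝ) ^ k) (by positivity)
  have hstep (i : ι) (k : ℕ) : ‖c k i - c (k + 1) i‖ * γ (v i) ≤ 2⁻¹ ^ k :=
    calc ‖c k i - c (k + 1) i‖ * γ (v i) ≤ γ (∑ j, (c k j - c (k + 1) j) • v j) :=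
          (isOrthogonal_iff_forall_norm_mul_le hsmul hna).1 hv (fun j => c k j - c (k + 1) j) i
      _ ≤ max (γ (u + ∑ j, c k j • v j)) (γ (u + ∑ j, c (k + 1) j • v j)) := by
          rw [← add_sum_smul_sub_add_sum_smul]
          exact apply_sub_le_max hsmul hna _ _
      _ ≤ 2⁻¹ ^ k := max_le (hc k).le ((hc (k + 1)).le.trans
          (pow_le_pow_of_le_one (by norm_num) (by norm_num) k.le_succ))
  choose L hL using fun i => exists_forall_norm_sub_mul_le_of_geometric
    (apply_nonneg_of_map_smul hsmul hna (v i)) (by norm_num) (by norm_num) (hstep i)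
  refine ⟨L, le_antisymm ?_ (apply_nonneg_of_map_smul hsmul hna _)⟩
  have hbound (k : ℕ) : γ (u + ∑ i, L i • v i) ≤ 2⁻¹ ^ k / (1 - 2⁻¹) := by
    have hhead : γ (u + ∑ i, c k i • v i) ≤ 2⁻¹ ^ k / (1 - 2⁻¹) :=
      (hc k).le.trans (le_div_self (by positivity) (by norm_num) (by norm_num))
    have htail : γ (∑ i, (L i - c k i) • v i) ≤ 2⁻¹ ^ k / (1 - 2⁻¹) :=
      apply_sum_le_of_forall_le hsmul hna (by positivity) fun i _ => by
        rw [hsmul, norm_sub_rev]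
        exact hL i k
    rw [sub_eq_iff_eq_add'.1 (add_sum_smul_sub_add_sum_smul u v L (c k))]
    exact (hna _ _).trans (max_le hhead htail)
  exact ge_of_tendsto' (by simpa using (tendsto_pow_atTop_nhds_zero_of_lt_one
    (by norm_num) (by norm_num : (2⁻¹ : ℝ) < 1)).div_const (1 - 2⁻¹)) hbound

theorem IsOrthogonal.exists_forall_apply_add_sum_le [CompleteSpace K] {q : ℝ} (hq : 1 < q)
    (hdisc : ∀ a : K, a ≠ 0 → ∃ m : ℤ, ‖a‖ = q ^ m) {v : ι → V} (hv : IsOrthogonal K γ v)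
    (u : V) : ∃ c₀ : ι → K, ∀ c : ι → K, γ (u + ∑ i, c₀ i • v i) ≤ γ (u + ∑ i, c i • v i) := by
  rcases isEmpty_or_nonempty ι with hι | hι
  · exact ⟨0, fun c => by rw [Subsingleton.elim c 0]⟩
  set f := fun c : ι → K => γ (u + ∑ i, c i • v i)
  have hf_nonneg (c : ι → K) : 0 ≤ f c := apply_nonneg_of_map_smul hsmul hna _
  by_contra! hmin
  rcases (le_ciInf hf_nonneg).eq_or_lt with hd | hd
  · obtain ⟨c₀, hc₀⟩ := hv.exists_apply_add_sum_eq_zero hsmul hna u fun ε hε =>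
      exists_lt_of_ciInf_lt (hd ▸ hε)
    obtain ⟨c, hc⟩ := hmin c₀
    exact (hf_nonneg c).not_gt (hc.trans_eq hc₀)
  set d := ⨅ c, f c
  -- No value of `f` is minimal, so each one is some `‖a‖ * γ (v i)`.
  set T := range f ∩ Iio (q * d)
  have hT : T ⊆ ⋃ i, range (fun a : K => ‖a‖ * γ (v i)) ∩ Ico d (q * d) := by
    rintro _ ⟨⟨c, rfl⟩, hcq⟩
    obtain ⟨c', hc'⟩ := hmin c
    obtain ⟨i, hi⟩ := hv.exists_eq_norm_mul fun j => c j - c' j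
    refine mem_iUnion.2 ⟨i, ⟨c i - c' i, ?_⟩, ciInf_le ⟨0, forall_mem_range.2 hf_nonneg⟩ c, hcq⟩
    beta_reduce
    rw [← hi, ← add_sum_smul_sub_add_sum_smul, apply_sub_eq_left_of_lt hsmul hna hc']
  have hT_finite : T.Finite := (finite_iUnion fun i => (subsingleton_range_norm_mul_inter_Ico hq
    hdisc (apply_nonneg_of_map_smul hsmul hna (v i)) d).finite).subset hT
  have hT_nonempty : T.Nonempty := by
    obtain ⟨c, hc⟩ := exists_lt_of_ciInf_lt (lt_mul_of_one_lt_left hd hq)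
    exact ⟨f c, mem_range_self c, hc⟩
  obtain ⟨_, ⟨⟨c₀, rfl⟩, hc₀q⟩, hc₀_min⟩ := exists_min_image T id hT_finite hT_nonempty
  obtain ⟨c, hc⟩ := hmin c₀
  exact hc.not_ge (hc₀_min _ ⟨mem_range_self c, hc.trans hc₀q⟩)

theorem exists_isOrthogonal_range_subset_span [CompleteSpace K] {q : ℝ} (hq : 1 < q)
    (hdisc : ∀ a : K, a ≠ 0 → ∃ m : ℤ, ‖a‖ = q ^ m) :
    ∀ {n : ℕ} (e : Fin n → V), ∃ v : Fin n → V, IsOrthogonal K γ v ∧ range e ⊆ span K (range v)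
  | 0, e => ⟨e, fun c => by simp [apply_zero_of_map_smul hsmul], by simp [range_eq_empty]⟩
  | n + 1, e => by
    obtain ⟨v, hv, hev⟩ := exists_isOrthogonal_range_subset_span hq hdisc (Fin.tail e)
    obtain ⟨c₀, hc₀⟩ := hv.exists_forall_apply_add_sum_le hsmul hna hq hdisc (e 0)
    set w₀ := ∑ i, c₀ i • v i
    have hw₀ : w₀ ∈ span K (range v) := (mem_span_range_iff_exists_fun K).2 ⟨c₀, rfl⟩
    set v' : Fin (n + 1) → V := Fin.cons (e 0 + w₀) v
    have hspan : span K (range v) ≤ span K (range v') :=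
      span_mono (by rw [Fin.range_cons]; exact subset_insert _ _)
    refine ⟨v', hv.cons hsmul hna fun w hw => ?_, ?_⟩
    · obtain ⟨c, hc⟩ := (mem_span_range_iff_exists_fun K).1 (add_mem hw₀ hw)
      rw [add_assoc, ← hc]
      exact hc₀ c
    · rintro _ ⟨i, rfl⟩
      cases i using Fin.cases with
      | zero =>
        simpa [v'] using sub_mem (subset_span (mem_range_self 0)) (hspan hw₀)
      | succ j => exact hspan (hev (mem_range_self j))

end Ultrametric

theorem exists_canonical_basis_for_seminorm_general
    {K : Type*} [NontriviallyNormedField K] [CompleteSpace K]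
    (q : ℝ) (hq : 1 < q) (hdisc : ∀ a : K, a ≠ 0 → ∃ m : ℤ, ‖a‖ = q ^ m)
    {V : Type*} [AddCommGroup V] [Module K V] [FiniteDimensional K V]
    {n : ℕ} (hn : Module.finrank K V = n)
    (γ : V → ℝ) (h : IsSeminorm K γ) :
    ∃ b : Module.Basis (Fin n) K V, IsCanonical γ b := by
  let b₀ := Module.finBasisOfFinrankEq K V hn
  obtain ⟨v, hv, hb₀v⟩ := exists_isOrthogonal_range_subset_span h.smul h.add_le hq hdisc b₀
  have htop : ⊤ ≤ span K (range v) := by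
    rw [← b₀.span_eq]
    exact span_le.2 hb₀v
  refine ⟨basisOfTopLeSpanOfCardEqFinrank v htop (by simp [hn]), fun c => ?_⟩
  rw [coe_basisOfTopLeSpanOfCardEqFinrank]
  exact hv c

/-- Every seminorm on a finite-dimensional vector space over a non-archimedean local
field (complete, with discrete value group) is canonical with respect to some basis. -/
theorem exists_canonical_basis_for_seminorm
    {K : Type*} [NontriviallyNormedField K] [IsUltrametricDist K] [CompleteSpace K]
    (q : ℝ) (hq : 1 < q) (hdisc : ∀ a : K, a ≠ 0 → ∃ m : ℤ, ‖a‖ = q ^ m)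
    {V : Type*} [AddCommGroup V] [Module K V] [FiniteDimensional K V]
    {n : ℕ} (hn : Module.finrank K V = n)
    (γ : V → ℝ) (h : IsSeminorm K γ) :
    ∃ b : Module.Basis (Fin n) K V, IsCanonical γ b :=
  exists_canonical_basis_for_seminorm_general q hq hdisc hn γ h
end

section
/- Fix ε > 0, a vector v ∈ V, a basis v₁,…,vₙ, and a seminorm γ₀ canonical with respect to this basis with γ₀(v) ≠ 0. Then there exist a neighbourhood W of v in V and a neighbourhood Γ of γ₀ in the space of canonical seminorms (pointwise topology) such that |γ(w) − γ₀(w)| < 3ε for all w ∈ W and all γ ∈ Γ canonical with respect to v₁,…,vₙ. -/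
/-- `γ` is canonical with respect to the standard basis of `Kⁿ`. -/
def IsCanonicalStd {K : Type*} [NormedField K] {n : ℕ} (γ : (Fin n → K) → ℝ) : Prop :=
  ∀ lam : Fin n → K, γ lam = ⨆ i, ‖lam i‖ * γ (Pi.single i 1)

open Filter Topology

theorem continuous_iSup_of_fintype {X L ι : Type*} [TopologicalSpace X]
    [ConditionallyCompleteLattice L] [TopologicalSpace L] [ContinuousSup L] [Fintype ι]
    {f : ι → X → L} (hf : ∀ i, Continuous (f i)) : Continuous fun x ↦ ⨆ i, f i x := by
  cases isEmpty_or_nonempty ι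
  · simp only [iSup_of_empty']
    exact continuous_const
  · simp only [← Finset.sup'_univ_eq_ciSup]
    exact Continuous.finset_sup'_apply _ fun i _ ↦ hf i

theorem ContinuousAt.exists_isOpen_abs_sub_lt {X Y : Type*} [TopologicalSpace X]
    [TopologicalSpace Y] {F : X × Y → ℝ} {x₀ : X} {y₀ : Y} (hF : ContinuousAt F (x₀, y₀))
    {ε : ℝ} (hε : 0 < ε) :
    ∃ W ∈ 𝓝 y₀, ∃ U : Set X, IsOpen U ∧ x₀ ∈ U ∧
      ∀ y ∈ W, ∀ x ∈ U, |F (x, y) - F (x₀, y)| < ε := by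
  have hnear : ∀ᶠ p in 𝓝 (x₀, y₀), |F p - F (x₀, y₀)| < ε / 2 :=
    Metric.tendsto_nhds.mp hF _ (half_pos hε)
  obtain ⟨u, hu, W, hW, huW⟩ := mem_nhds_prod_iff.mp hnear
  obtain ⟨U, hUu, hU, hx₀⟩ := mem_nhds_iff.mp hu
  refine ⟨W, hW, U, hU, hx₀, fun y hy x hx ↦ ?_⟩
  have h₁ : |F (x, y) - F (x₀, y₀)| < ε / 2 := huW ⟨hUu hx, hy⟩
  have h₂ : |F (x₀, y) - F (x₀, y₀)| < ε / 2 := huW ⟨mem_of_mem_nhds hu, hy⟩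
  calc |F (x, y) - F (x₀, y)|
      ≤ |F (x, y) - F (x₀, y₀)| + |F (x₀, y₀) - F (x₀, y)| := abs_sub_le _ _ _
    _ < ε := by rw [abs_sub_comm (F (x₀, y₀))]; linarith

section Canonical

variable {K : Type*} [NormedField K] {n : ℕ}

noncomputable def canonicalEval (γ : (Fin n → K) → ℝ) (w : Fin n → K) : ℝ :=
  ⨆ i, ‖w i‖ * γ (Pi.single i 1)

theorem IsCanonicalStd.eq_canonicalEval {γ : (Fin n → K) → ℝ} (hγ : IsCanonicalStd γ)
    (w : Fin n → K) : γ w = canonicalEval γ w :=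
  hγ w

theorem continuous_canonicalEval :
    Continuous fun p : ((Fin n → K) → ℝ) × (Fin n → K) ↦ canonicalEval p.1 p.2 :=
  continuous_iSup_of_fintype fun i ↦
    ((continuous_apply i).comp continuous_snd).norm.mul
      ((continuous_apply _).comp continuous_fst)

end Canonical

theorem canonical_seminorm_local_estimate_general
    {K : Type*} [NontriviallyNormedField K] {n : ℕ}
    (ε : ℝ) (hε : 0 < ε) (v : Fin n → K)
    (γ₀ : (Fin n → K) → ℝ) (hc₀ : IsCanonicalStd γ₀) :
    ∃ W ∈ nhds v, ∃ Γ : Set ((Fin n → K) → ℝ), IsOpen Γ ∧ γ₀ ∈ Γ ∧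
      ∀ w ∈ W, ∀ γ ∈ Γ, IsSeminorm K γ → IsCanonicalStd γ →
        |γ w - γ₀ w| < 3 * ε := by
  obtain ⟨W, hW, Γ, hΓ, hγ₀, hclose⟩ :=
    (continuous_canonicalEval (K := K)).continuousAt.exists_isOpen_abs_sub_lt
      (x₀ := γ₀) (y₀ := v) (by positivity : 0 < 3 * ε)
  refine ⟨W, hW, Γ, hΓ, hγ₀, fun w hw γ hγ _ hc ↦ ?_⟩
  rw [hc.eq_canonicalEval, hc₀.eq_canonicalEval]
  exact hclose w hw γ hγ

/-- Local uniform estimate for canonical seminorms near a point where the reference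
seminorm does not vanish. -/
theorem canonical_seminorm_local_estimate
    {K : Type*} [NontriviallyNormedField K] [IsUltrametricDist K] {n : ℕ}
    (ε : ℝ) (hε : 0 < ε) (v : Fin n → K)
    (γ₀ : (Fin n → K) → ℝ) (h₀ : IsSeminorm K γ₀) (hc₀ : IsCanonicalStd γ₀)
    (hv : γ₀ v ≠ 0) :
    ∃ W ∈ nhds v, ∃ Γ : Set ((Fin n → K) → ℝ), IsOpen Γ ∧ γ₀ ∈ Γ ∧
      ∀ w ∈ W, ∀ γ ∈ Γ, IsSeminorm K γ → IsCanonicalStd γ →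
        |γ w - γ₀ w| < 3 * ε :=
  canonical_seminorm_local_estimate_general ε hε v γ₀ hc₀
end

section
/- The map from ℝⁿ modulo the diagonal (i.e. points x = (x₁,…,xₙ) up to adding a common constant) to equivalence classes of norms on Kⁿ, given by x ↦ [γₓ] with γₓ(λ₁,…,λₙ) = maxᵢ |λᵢ| q^{−xᵢ}, is well-defined and injective. -/
/-!
Shifting `x` by `c` multiplies every term of the maximum defining `γₓ` by `q^{-c}`, so the
class of `γₓ` only depends on `x` modulo the diagonal. Conversely, `γₓ(eᵢ) = q^{-xᵢ}` on the
standard basis, so `γ_y = d γₓ` forces `yᵢ = xᵢ - log_q d` for every `i`.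
-/

open Real

noncomputable section

namespace Apartment

variable {K ι : Type*} [NormedField K] {q : ℝ}

def canonicalNorm (q : ℝ) (z : ι → ℝ) (lam : ι → K) : ℝ :=
  ⨆ i, ‖lam i‖ * q ^ (-(z i))

theorem canonicalNorm_add_const (hq : 0 < q) (x : ι → ℝ) (c : ℝ) (lam : ι → K) :
    canonicalNorm q (fun i => x i + c) lam = q ^ (-c) * canonicalNorm q x lam := by
  rw [canonicalNorm, canonicalNorm, mul_iSup_of_nonneg (rpow_nonneg hq.le _)]
  congr 1 with i
  rw [neg_add, rpow_add hq]
  ring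

theorem canonicalNorm_single_one [Finite ι] [DecidableEq ι] (hq : 0 ≤ q) (z : ι → ℝ) (i : ι) :
    canonicalNorm q z (Pi.single i (1 : K)) = q ^ (-(z i)) := by
  have : Nonempty ι := ⟨i⟩
  unfold canonicalNorm
  refine le_antisymm (ciSup_le fun j => ?_) ?_
  · rcases eq_or_ne j i with rfl | hji
    · simp
    · simp [hji, rpow_nonneg hq]
  · simpa using le_ciSup (Finite.bddAbove_range
      fun j => ‖(Pi.single i (1 : K) : ι → K) j‖ * q ^ (-(z j))) i

theorem eq_add_neg_logb_of_rpow_neg_eq {a b d : ℝ} (hq : 0 < q) (hq₁ : q ≠ 1) (hd : 0 < d)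
    (h : q ^ (-b) = d * q ^ (-a)) : b = a + -logb q d := by
  rw [← rpow_logb hq hq₁ hd, ← rpow_add hq, rpow_right_inj hq hq₁] at h
  linarith

end Apartment

end

open Apartment in
/-- The map from points of the apartment (real n-tuples up to a common additive
constant) to homothety classes of canonical norms is well-defined and injective. -/
theorem apartment_to_norm_classes_wellDefined_injective
    {K : Type*} [NontriviallyNormedField K] {n : ℕ}
    (q : ℝ) (hq : 1 < q) (x y : Fin n → ℝ)
    (γ : (Fin n → ℝ) → ((Fin n → K) → ℝ))
    (hγ : ∀ (z : Fin n → ℝ) (lam : Fin n → K),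
      γ z lam = ⨆ i, ‖lam i‖ * q ^ (-(z i))) :
    (∃ c : ℝ, ∀ i, y i = x i + c) ↔
      (∃ d : ℝ, 0 < d ∧ ∀ lam : Fin n → K, γ y lam = d * γ x lam) := by
  have hq₀ : 0 < q := one_pos.trans hq
  obtain rfl : γ = canonicalNorm q := funext₂ hγ
  constructor
  · rintro ⟨c, hc⟩
    obtain rfl : y = fun i => x i + c := funext hc
    exact ⟨q ^ (-c), rpow_pos_of_pos hq₀ _, canonicalNorm_add_const hq₀ x c⟩
  · rintro ⟨d, hd, hyx⟩
    refine ⟨-logb q d, fun i => eq_add_neg_logb_of_rpow_neg_eq hq₀ hq.ne' hd ?_⟩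
    simpa only [canonicalNorm_single_one hq₀.le] using hyx (Pi.single i 1)
end
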